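/- Let L be a language over an alphabet Σ such that L contains only finitely many primitive words and the root √L of L is infinite. Then L is not regular. -/

import Mathlib

/-- `wpow v n` is the word `vⁿ`, the `n`-fold concatenation of the word `v` with itself. -/
def wpow {α : Type*} (v : List α) : ℕ → List α
  | 0 => []
  | n + 1 => v ++ wpow v n

/-- A nonempty word `u` is primitive if `u = vⁿ` implies `n = 1`. -/
def Primitive {α : Type*} (u : List α) : Prop :=
  u ≠ [] ∧ ∀ (v : List α) (n : ℕ), u = wpow v n → n = 1

/-- The root of a language: the set of primitive roots `√u` of the nonempty words `u ∈ L`. -/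
def langRoot {α : Type*} (L : Language α) : Language α :=
  {p : List α | Primitive p ∧ ∃ u ∈ L, ∃ d : ℕ, 1 ≤ d ∧ u = wpow p d}

/-!
Let `N` be the number of states of a DFA accepting `L`.

If some root `p` is longer than `N`, pump a word `p ^ d = a b c ∈ L` with `|a b| ≤ N`. For large `k`
the word `a b ^ k c ∈ L` is primitive: otherwise its conjugate `c a b ^ k` is a proper power, and a
proper power with a long suffix `y ^ (m k)`, `y` primitive, forces its prefix `c a` into `y*`; then
`a b c` would be a power of a conjugate of `y`, which is shorter than the primitive word `p`.

If all roots have length at most `N`, infinitely many roots `v` have the same length `ℓ` and induce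
the same map on states. For one of them, `u` with `u ^ d ∈ L`, all words `u ^ (d - 1) v` lie in `L`,
and only finitely many of them are proper powers, as such a power is determined by its exponent and
a prefix of `u ^ (d - 1)`.
-/

section Words

variable {α : Type*}

@[simp]
theorem wpow_zero (v : List α) : wpow v 0 = [] := rfl

theorem wpow_succ (v : List α) (n : ℕ) : wpow v (n + 1) = v ++ wpow v n := rfl

@[simp]
theorem wpow_one (v : List α) : wpow v 1 = v := List.append_nil v

@[simp]
theorem wpow_nil (n : ℕ) : wpow ([] : List α) n = [] := by
  induction n with
  | zero => rfl
  | succ n ih => rw [wpow_succ, ih, List.nil_append]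

@[simp]
theorem length_wpow (v : List α) (n : ℕ) : (wpow v n).length = n * v.length := by
  induction n with
  | zero => simp
  | succ n ih => rw [wpow_succ, List.length_append, ih, Nat.succ_mul, Nat.add_comm]

theorem wpow_add (v : List α) (m n : ℕ) : wpow v (m + n) = wpow v m ++ wpow v n := by
  induction m with
  | zero => simp
  | succ m ih => rw [Nat.add_right_comm, wpow_succ, ih, wpow_succ, List.append_assoc]

theorem wpow_succ' (v : List α) (n : ℕ) : wpow v (n + 1) = wpow v n ++ v := by
  rw [wpow_add, wpow_one]

theorem wpow_mul (v : List α) (m n : ℕ) : wpow v (m * n) = wpow (wpow v m) n := by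
  induction n with
  | zero => simp
  | succ n ih => rw [Nat.mul_succ, Nat.add_comm, wpow_add, ih, wpow_succ]

theorem wpow_eq_flatten_replicate (v : List α) (n : ℕ) :
    wpow v n = (List.replicate n v).flatten := by
  induction n with
  | zero => rfl
  | succ n ih => rw [wpow_succ, ih, List.replicate_succ, List.flatten_cons]

theorem getElem?_wpow (v : List α) {n i : ℕ} (hi : i < n * v.length) :
    (wpow v n)[i]? = v[i % v.length]? := by
  induction n generalizing i with
  | zero => simp at hi
  | succ n ih =>
    rw [wpow_succ]
    rcases lt_or_ge i v.length with hiv | hiv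
    · rw [List.getElem?_append_left hiv, Nat.mod_eq_of_lt hiv]
    · rw [List.getElem?_append_right hiv, ih (by rw [Nat.succ_mul] at hi; omega),
        ← Nat.mod_eq_sub_mod hiv]

theorem rotate_wpow (t : List α) (J n : ℕ) : (wpow t J).rotate n = wpow (t.rotate n) J := by
  apply List.ext_getElem?
  intro i
  rcases lt_or_ge i (J * t.length) with hi | hi
  · have ht : 0 < t.length := Nat.pos_of_mul_pos_left (Nat.zero_lt_of_lt hi)
    rw [List.getElem?_rotate (by simpa using hi), length_wpow,
      getElem?_wpow t (Nat.mod_lt _ (by omega)), Nat.mod_mod_of_dvd _ (Nat.dvd_mul_left _ _),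
      getElem?_wpow _ (by rwa [List.length_rotate]), List.length_rotate,
      List.getElem?_rotate (Nat.mod_lt _ ht), Nat.mod_add_mod]
  · rw [List.getElem?_eq_none (by simpa using hi), List.getElem?_eq_none (by simpa using hi)]

theorem append_comm_eq_wpow_rotate {X Y t : List α} {J : ℕ} (h : X ++ Y = wpow t J) :
    Y ++ X = wpow (t.rotate X.length) J := by
  rw [← rotate_wpow, ← h, List.rotate_append_length_eq]

theorem exists_wpow_of_append_comm {X Y : List α} (h : X ++ Y = Y ++ X) :
    ∃ z a b, X = wpow z a ∧ Y = wpow z b := by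
  rcases eq_or_ne X [] with rfl | hX
  · exact ⟨Y, 0, 1, rfl, (wpow_one Y).symm⟩
  rcases eq_or_ne Y [] with rfl | hY
  · exact ⟨X, 1, 0, (wpow_one X).symm, rfl⟩
  rcases List.append_eq_append_iff.1 h with ⟨V, hY₁, hY₂⟩ | ⟨V, hX₁, hX₂⟩
  · obtain ⟨z, a, b, hXz, hVz⟩ := exists_wpow_of_append_comm (hY₁.symm.trans hY₂)
    exact ⟨z, a, a + b, hXz, by rw [hY₁, wpow_add, hXz, hVz]⟩
  · obtain ⟨z, a, b, hVz, hYz⟩ := exists_wpow_of_append_comm (hX₂.symm.trans hX₁)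
    exact ⟨z, b + a, b, by rw [hX₁, wpow_add, hYz, hVz], hYz⟩
termination_by X.length + Y.length
decreasing_by all_goals simp_all [List.length_pos_iff]

theorem Primitive.ne_nil {p : List α} (hp : Primitive p) : p ≠ [] := hp.1

theorem exists_wpow_of_not_primitive {u : List α} (hu : u ≠ []) (h : ¬Primitive u) :
    ∃ v n, u = wpow v n ∧ 2 ≤ n := by
  simp only [Primitive, ne_eq, hu, not_false_eq_true, true_and, not_forall] at h
  obtain ⟨v, n, huv, hn⟩ := h
  refine ⟨v, n, huv, ?_⟩
  rcases n with _ | _ | n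
  · exact absurd huv hu
  · exact absurd rfl hn
  · omega

theorem exists_primitive_wpow_eq {u : List α} (hu : u ≠ []) :
    ∃ y n, Primitive y ∧ n ≠ 0 ∧ u = wpow y n := by
  by_cases hp : Primitive u
  · exact ⟨u, 1, hp, one_ne_zero, (wpow_one u).symm⟩
  obtain ⟨v, n, rfl, hn⟩ := exists_wpow_of_not_primitive hu hp
  have hv : v ≠ [] := by rintro rfl; simp at hu
  obtain ⟨y, m, hy, hm, rfl⟩ := exists_primitive_wpow_eq hv
  exact ⟨y, m * n, hy, by positivity, (wpow_mul y m n).symm⟩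
termination_by u.length
decreasing_by
  have : 0 < v.length := List.length_pos_iff.2 hv
  subst_vars
  simp only [length_wpow]
  nlinarith

theorem Primitive.length_dvd_of_rotate_eq_self {p : List α} {n : ℕ} (hp : Primitive p)
    (h : p.rotate n = p) : p.length ∣ n := by
  rw [← List.rotate_mod] at h
  set r := n % p.length
  apply Nat.dvd_of_mod_eq_zero
  by_contra hr
  have hrp : r < p.length := Nat.mod_lt _ (List.length_pos_iff.2 hp.ne_nil)
  rw [List.rotate_eq_drop_append_take hrp.le] at h
  obtain ⟨z, a, b, hdrop, htake⟩ :=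
    exists_wpow_of_append_comm (h.trans (List.take_append_drop r p).symm)
  have hab := hp.2 z (b + a) (by rw [wpow_add, ← htake, ← hdrop, List.take_append_drop])
  obtain rfl | rfl : a = 0 ∨ b = 0 := by omega
  · simp only [wpow_zero, List.drop_eq_nil_iff] at hdrop
    omega
  · simp only [wpow_zero, List.take_eq_nil_iff] at htake
    exact hr (htake.resolve_right hp.ne_nil)

theorem Primitive.length_dvd_of_wpow_eq_wpow {p z : List α} {d J : ℕ} (hp : Primitive p)
    (hd : d ≠ 0) (h : wpow p d = wpow z J) : p.length ∣ z.length := by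
  apply hp.length_dvd_of_rotate_eq_self
  have hrot : wpow (p.rotate z.length) d = wpow p d := by
    rw [← rotate_wpow, h, rotate_wpow, List.rotate_length]
  obtain ⟨d, rfl⟩ := Nat.exists_eq_succ_of_ne_zero hd
  exact (List.append_inj hrot (List.length_rotate _ _)).1

theorem eq_wpow_of_append_wpow_eq_wpow {u y : List α} {a b : ℕ}
    (h : u ++ wpow y a = wpow y b) : u = wpow y (b - a) := by
  have hlen : u.length + a * y.length = b * y.length := by simpa using congrArg List.length h
  rcases eq_or_ne y [] with rfl | hy
  · simpa using hlen
  have hab : a ≤ b :=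
    Nat.le_of_mul_le_mul_right (by omega : a * y.length ≤ b * y.length)
      (List.length_pos_iff.2 hy)
  rw [← Nat.sub_add_cancel hab, wpow_add] at h
  exact (List.append_inj' h rfl).1

theorem Primitive.exists_eq_wpow_of_append_wpow_eq_wpow {y u t : List α} {K J : ℕ}
    (hy : Primitive y) (h : u ++ wpow y K = wpow t J) (hJ : 2 ≤ J)
    (hK : u.length + 2 * y.length ≤ K * y.length) : ∃ j, u = wpow y j := by
  have hlen : u.length + K * y.length = J * t.length := by simpa using congrArg List.length h
  have hty : t.length + y.length ≤ K * y.length := by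
    have := Nat.mul_le_mul_right t.length hJ
    omega
  have hsuffix : ∀ i, (wpow t J)[u.length + i]? = (wpow y K)[i]? := fun i => by
    rw [← h, List.getElem?_append_right (by omega), Nat.add_sub_cancel_left]
  -- the suffix `y ^ K` inherits the period `|t|` of `t ^ J`
  have hrot : y.rotate t.length = y := by
    apply List.ext_getElem?
    intro j
    rcases lt_or_ge j y.length with hj | hj
    · have hper : (wpow t J)[u.length + j + t.length]? = (wpow t J)[u.length + j]? := by
        rw [getElem?_wpow _ (by omega), getElem?_wpow _ (by omega), Nat.add_mod_right]
      rw [List.getElem?_rotate hj, ← getElem?_wpow y (n := K) (by omega), ← hsuffix,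
        ← Nat.add_assoc, hper, hsuffix, getElem?_wpow y (by omega), Nat.mod_eq_of_lt hj]
    · rw [List.getElem?_eq_none (by simpa using hj), List.getElem?_eq_none hj]
  obtain ⟨c, hc⟩ := hy.length_dvd_of_rotate_eq_self hrot
  have hcK : c ≤ K :=
    Nat.le_of_mul_le_mul_right (by rw [Nat.mul_comm]; omega : c * y.length ≤ K * y.length)
      (List.length_pos_iff.2 hy.ne_nil)
  have ht : t = wpow y c := by
    have h' : (u ++ wpow y (K - c)) ++ wpow y c = wpow t (J - 1) ++ t := by
      rw [List.append_assoc, ← wpow_add, Nat.sub_add_cancel hcK, h, ← wpow_succ',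
        Nat.sub_add_cancel (by omega)]
    exact (List.append_inj' h' (by simp [hc, Nat.mul_comm])).2.symm
  exact ⟨c * J - K, eq_wpow_of_append_wpow_eq_wpow (by rw [h, ht, wpow_mul])⟩

theorem Primitive.primitive_append_wpow_append {p a b c : List α} {d k : ℕ} (hp : Primitive p)
    (hd : d ≠ 0) (habc : a ++ b ++ c = wpow p d) (hb : b ≠ []) (hbp : b.length < p.length)
    (hk : a.length + c.length + 2 * b.length ≤ k) : Primitive (a ++ wpow b k ++ c) := by
  have hkb : k ≤ k * b.length := Nat.le_mul_of_pos_right k (List.length_pos_iff.2 hb)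
  obtain ⟨y, m, hy, hm, rfl⟩ := exists_primitive_wpow_eq hb
  have hy₀ : 0 < y.length := List.length_pos_iff.2 hy.ne_nil
  have hym : y.length ≤ m * y.length := Nat.le_mul_of_pos_left _ (Nat.pos_of_ne_zero hm)
  simp only [length_wpow] at hk hkb hbp
  by_contra hnp
  obtain ⟨t, J, ht, hJ⟩ := exists_wpow_of_not_primitive
    (List.ne_nil_of_length_pos (by simp only [List.length_append, length_wpow]; omega)) hnp
  -- `c a b ^ k` is conjugate to `a b ^ k c`, so it is a proper power as well
  have hrot : (c ++ a) ++ wpow y (m * k) = wpow (t.rotate (a ++ wpow (wpow y m) k).length) J := by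
    rw [List.append_assoc, wpow_mul]
    exact append_comm_eq_wpow_rotate ht
  obtain ⟨j, hj⟩ := hy.exists_eq_wpow_of_append_wpow_eq_wpow hrot hJ (by
    rw [List.length_append, show m * k * y.length = k * (m * y.length) by ring]
    exact le_trans (by omega) hkb)
  have hcab : c ++ (a ++ wpow y m) = wpow y (j + m) := by
    rw [← List.append_assoc, hj, wpow_add]
  have hdvd := hp.length_dvd_of_wpow_eq_wpow hd (habc.symm.trans (append_comm_eq_wpow_rotate hcab))
  rw [List.length_rotate] at hdvd
  have := Nat.le_of_dvd hy₀ hdvd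
  omega

theorem finite_setOf_not_primitive_append (A : List α) :
    {v : List α | v.length ≤ A.length ∧ ¬Primitive (A ++ v)}.Finite := by
  refine (((Set.finite_Iic A.length).prod (Set.finite_Iic (2 * A.length))).image
    fun iJ : ℕ × ℕ => (wpow (A.take iJ.1) iJ.2).drop A.length).subset ?_
  rintro v ⟨hvA, hnp⟩
  rcases eq_or_ne (A ++ v) [] with hnil | hne
  · obtain ⟨rfl, rfl⟩ := List.append_eq_nil_iff.1 hnil
    exact ⟨(0, 0), by simp, rfl⟩
  obtain ⟨t, J, ht, hJ⟩ := exists_wpow_of_not_primitive hne hnp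
  have hlen : A.length + v.length = J * t.length := by simpa using congrArg List.length ht
  have htpos : 0 < t.length := List.length_pos_iff.2 (by rintro rfl; simp [hne] at ht)
  have h2J := Nat.mul_le_mul_right t.length hJ
  have hJt := Nat.le_mul_of_pos_right J htpos
  -- a proper power of length at most `2 |A|` is determined by `J` and its prefix of `A`
  have htA : A.take t.length = t := by
    obtain ⟨J, rfl⟩ : ∃ J', J = J' + 1 := ⟨J - 1, by omega⟩
    rw [← List.take_append_of_le_length (l₂ := v) (by omega), ht, wpow_succ, List.take_left]
  refine ⟨(t.length, J), ⟨by simp only [Set.mem_Iic]; omega, by simp only [Set.mem_Iic]; omega⟩, ?_⟩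
  simp only [htA, ← ht, List.drop_left]

end Words

theorem Set.Infinite.exists_infinite_fiber {α β : Type*} {s : Set α} {t : Set β} {f : α → β}
    (hs : s.Infinite) (hf : Set.MapsTo f s t) (ht : t.Finite) :
    ∃ b, {a ∈ s | f a = b}.Infinite := by
  by_contra! h
  exact hs ((ht.biUnion fun b _ => h b).subset fun x hx => Set.mem_biUnion (hf hx) ⟨hx, rfl⟩)

namespace DFA

open Computability

variable {α σ : Type*} (M : DFA α σ)

theorem append_mem_accepts_iff_of_evalFrom_eq {x v w : List α}
    (h : ∀ q, M.evalFrom q v = M.evalFrom q w) : x ++ v ∈ M.accepts ↔ x ++ w ∈ M.accepts := by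
  simp only [mem_accepts, eval, evalFrom_of_append, h]

theorem append_wpow_append_mem_accepts {a b c : List α} (h : {a} * {b}∗ * {c} ≤ M.accepts) (k : ℕ) :
    a ++ wpow b k ++ c ∈ M.accepts := by
  refine h (Language.mem_mul.2 ⟨a ++ wpow b k, Language.mem_mul.2 ⟨a, rfl, wpow b k, ?_, rfl⟩, c,
    rfl, rfl⟩)
  exact Language.mem_kstar.2 ⟨List.replicate k b, wpow_eq_flatten_replicate b k,
    fun y hy => List.eq_of_mem_replicate hy⟩

theorem infinite_primitive_accepts_of_card_lt_length [Fintype σ] {p : List α}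
    (hp : p ∈ langRoot M.accepts) (hlen : Fintype.card σ < p.length) :
    {w | w ∈ M.accepts ∧ Primitive w}.Infinite := by
  obtain ⟨hp, w, hw, d, hd, rfl⟩ := hp
  obtain ⟨a, b, c, habc, hab, hb, hpump⟩ :=
    M.pumping_lemma hw (by rw [length_wpow]; nlinarith)
  set K := a.length + c.length + 2 * b.length
  refine Set.infinite_of_injective_forall_mem (f := fun i => a ++ wpow b (K + i) ++ c) ?_
    fun i => ⟨M.append_wpow_append_mem_accepts hpump _,
      hp.primitive_append_wpow_append (by omega) habc.symm hb (by omega) (by omega)⟩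
  intro i j hij
  have hlen := congrArg List.length hij
  simp only [List.length_append, length_wpow] at hlen
  have := Nat.eq_of_mul_eq_mul_right (List.length_pos_iff.2 hb) (by omega :
    (K + i) * b.length = (K + j) * b.length)
  omega

theorem infinite_primitive_accepts_of_length_le [Finite σ] {N : ℕ}
    (hroot : (langRoot M.accepts).Infinite) (hN : ∀ p ∈ langRoot M.accepts, p.length ≤ N) :
    {w | w ∈ M.accepts ∧ Primitive w}.Infinite := by
  -- infinitely many roots act alike on the states and have the same length
  obtain ⟨⟨g, ℓ⟩, hS⟩ := hroot.exists_infinite_fiber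
    (f := fun p => ((fun q => M.evalFrom q p), p.length)) (t := Set.univ ×ˢ Set.Iic N)
    (fun p hp => ⟨trivial, hN p hp⟩) (Set.finite_univ.prod (Set.finite_Iic N))
  set S := {p ∈ langRoot M.accepts | ((fun q => M.evalFrom q p), p.length) = (g, ℓ)}
  obtain ⟨u, ⟨hu, w, hw, d, hd, rfl⟩, hug⟩ := hS.nonempty
  simp only [Prod.ext_iff] at hug
  set A := wpow u (d - 1)
  have hmem : ∀ v ∈ S, A ++ v ∈ M.accepts := by
    rintro v ⟨-, hvg⟩
    simp only [Prod.ext_iff] at hvg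
    rw [M.append_mem_accepts_iff_of_evalFrom_eq fun q => (congrFun hvg.1 q).trans
      (congrFun hug.1 q).symm, ← wpow_succ', Nat.sub_add_cancel hd]
    exact hw
  have hbad : {v ∈ S | ¬Primitive (A ++ v)}.Finite := by
    rcases eq_or_lt_of_le hd with rfl | hd2
    · exact Set.finite_empty.subset fun v ⟨hvS, hnp⟩ => hnp hvS.1.1
    refine (finite_setOf_not_primitive_append A).subset fun v ⟨hvS, hnp⟩ => ⟨?_, hnp⟩
    have hv := hvS.2
    simp only [Prod.ext_iff] at hv
    rw [length_wpow, hv.2, ← hug.2]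
    exact Nat.le_mul_of_pos_left _ (by omega)
  refine (Set.Infinite.image (f := (A ++ ·)) (fun x _ y _ h => List.append_cancel_left h)
    (hS.sdiff hbad)).mono ?_
  rintro _ ⟨v, ⟨hvS, hvgood⟩, rfl⟩
  exact ⟨hmem v hvS, by_contra fun hnp => hvgood ⟨hvS, hnp⟩⟩

end DFA

/-- A language containing only finitely many primitive words and having an infinite root
is not regular. -/
theorem not_regular_of_finitely_many_primitive_infinite_root {α : Type*} (L : Language α)
    (hfin : Set.Finite {w : List α | w ∈ L ∧ Primitive w})
    (hroot : Set.Infinite (langRoot L)) :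
    ¬ L.IsRegular := by
  rintro ⟨σ, _, M, rfl⟩
  refine hfin.not_infinite ?_
  by_cases hshort : ∀ p ∈ langRoot M.accepts, p.length ≤ Fintype.card σ
  · exact M.infinite_primitive_accepts_of_length_le hroot hshort
  · obtain ⟨p, hp, hlen⟩ : ∃ p ∈ langRoot M.accepts, Fintype.card σ < p.length := by
      simpa using hshort
    exact M.infinite_primitive_accepts_of_card_lt_length hp hlen
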